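/- Let r > 0, let M be an arbitrary real 2×2 matrix, and let g be a real symmetric 2×2 matrix. Let σ' = (I₂ ⊕ M) γ_TMSS,r (I₂ ⊕ M)ᵀ + (0 ⊕ g), written in 2×2 blocks σ' = [[α', γ'],[γ'ᵀ, β']]. Then σ' satisfies the separability condition det α' + det β' − 2 det γ' ≤ 4 det σ' + 1/4 if and only if 4 det g ≥ (det M + 1)². -/

import Mathlib

open Matrix

/-- Direct sum of two real 2×2 matrices, as a 4×4 (block) matrix. -/
noncomputable def dsum (A B : Matrix (Fin 2) (Fin 2) ℝ) :
    Matrix (Fin 2 ⊕ Fin 2) (Fin 2 ⊕ Fin 2) ℝ :=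
  Matrix.fromBlocks A 0 0 B

/-- The Pauli-z matrix σ_z = diag(1, -1). -/
noncomputable def sigmaZ : Matrix (Fin 2) (Fin 2) ℝ := !![1, 0; 0, -1]

/-- Covariance matrix of the two-mode squeezed state with squeezing `r`. -/
noncomputable def tmss (r : ℝ) : Matrix (Fin 2 ⊕ Fin 2) (Fin 2 ⊕ Fin 2) ℝ :=
  (1/2 : ℝ) • Matrix.fromBlocks
    (Real.cosh r • (1 : Matrix (Fin 2) (Fin 2) ℝ)) (Real.sinh r • sigmaZ)
    (Real.sinh r • sigmaZ) (Real.cosh r • (1 : Matrix (Fin 2) (Fin 2) ℝ))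

/-- Separability condition det α + det β − 2 det γ ≤ 4 det σ + 1/4
for a 4×4 covariance matrix σ with blocks [[α, γ],[γᵀ, β]]. -/
def sepCond (σ : Matrix (Fin 2 ⊕ Fin 2) (Fin 2 ⊕ Fin 2) ℝ) : Prop :=
  (σ.toBlocks₁₁).det + (σ.toBlocks₂₂).det - 2 * (σ.toBlocks₁₂).det ≤ 4 * σ.det + 1/4

/-- Physicality (Robertson–Schrödinger) condition det α + det β + 2 det γ ≤ 4 det σ + 1/4
for a 4×4 covariance matrix σ with blocks [[α, γ],[γᵀ, β]]. -/
def physCond (σ : Matrix (Fin 2 ⊕ Fin 2) (Fin 2 ⊕ Fin 2) ℝ) : Prop :=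
  (σ.toBlocks₁₁).det + (σ.toBlocks₂₂).det + 2 * (σ.toBlocks₁₂).det ≤ 4 * σ.det + 1/4

/-
The top-left block of σ' is (cosh r / 2) I₂, so det σ' is (cosh r / 2)² times the determinant of
the Schur complement, which by σ_z² = I₂ and cosh² r − sinh² r = 1 is M Mᵀ / (2 cosh r) + g.
On 2×2 matrices det (a P + Q) is a quadratic polynomial in a, and in the separability inequality
the mixed terms between M Mᵀ and g cancel; what remains is
sinh² r · ((det M + 1)² − 4 det g) ≤ 0, and sinh r ≠ 0 because r ≠ 0.
-/

namespace Matrix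

variable {m n K : Type*} [Fintype m] [DecidableEq m] [Fintype n] [DecidableEq n] [Field K]

theorem det_fromBlocks_smul_one₁₁ {a : K} (ha : a ≠ 0) (B : Matrix m n K) (C : Matrix n m K)
    (D : Matrix n n K) :
    (fromBlocks (a • 1) B C D).det = a ^ Fintype.card m * (D - a⁻¹ • (C * B)).det := by
  let : Invertible (a • 1 : Matrix m m K) := ⟨a⁻¹ • 1, by simp [ha], by simp [ha]⟩
  rw [det_fromBlocks₁₁, det_smul, det_one, mul_one]
  change _ * (D - C * (a⁻¹ • 1 : Matrix m m K) * B).det = _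
  simp

theorem det_smul_add_fin_two {R : Type*} [CommRing R] (a : R) (P Q : Matrix (Fin 2) (Fin 2) R) :
    (a • P + Q).det = a ^ 2 * P.det + Q.det + a * ((P + Q).det - P.det - Q.det) := by
  simp only [det_fin_two, add_apply, smul_apply, smul_eq_mul]
  ring

end Matrix

theorem sigmaZ_mul_self : sigmaZ * sigmaZ = 1 := by
  simp [sigmaZ, ← Matrix.one_fin_two]

theorem det_sigmaZ : sigmaZ.det = -1 := by
  simp [sigmaZ]

theorem dsum_one_mul_tmss_mul_transpose_add (r : ℝ) (M g : Matrix (Fin 2) (Fin 2) ℝ) :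
    dsum 1 M * tmss r * (dsum 1 M)ᵀ + dsum 0 g =
      fromBlocks ((Real.cosh r / 2) • 1) ((Real.sinh r / 2) • (sigmaZ * Mᵀ))
        ((Real.sinh r / 2) • (M * sigmaZ)) ((Real.cosh r / 2) • (M * Mᵀ) + g) := by
  simp only [dsum, tmss, fromBlocks_transpose, fromBlocks_smul, fromBlocks_multiply, fromBlocks_add,
    transpose_one, transpose_zero, Matrix.mul_one, Matrix.one_mul, Matrix.mul_zero, Matrix.zero_mul,
    smul_zero, add_zero, zero_add, Matrix.mul_smul, Matrix.smul_mul]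
  congr 1 <;> module

theorem sepCond_dsum_one_mul_tmss_iff (r : ℝ) (M g : Matrix (Fin 2) (Fin 2) ℝ) :
    sepCond (dsum 1 M * tmss r * (dsum 1 M)ᵀ + dsum 0 g) ↔
      (M.det + 1) ^ 2 * Real.sinh r ^ 2 ≤ 4 * g.det * Real.sinh r ^ 2 := by
  set c := Real.cosh r
  set s := Real.sinh r
  have hc : c ≠ 0 := (Real.cosh_pos r).ne'
  have hcs : c ^ 2 = s ^ 2 + 1 := Real.cosh_sq r
  have hschur : (c / 2) • (M * Mᵀ) + g -
      (c / 2)⁻¹ • ((s / 2) • (M * sigmaZ) * (s / 2) • (sigmaZ * Mᵀ)) =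
        (1 / (2 * c)) • (M * Mᵀ) + g := by
    rw [smul_mul_smul_comm, mul_assoc, ← mul_assoc sigmaZ, sigmaZ_mul_self, Matrix.one_mul,
      smul_smul, add_sub_right_comm, ← sub_smul]
    congr 2
    field_simp
    linear_combination hcs
  rw [sepCond, dsum_one_mul_tmss_mul_transpose_add, toBlocks_fromBlocks₁₁, toBlocks_fromBlocks₁₂,
    toBlocks_fromBlocks₂₂, det_fromBlocks_smul_one₁₁ (div_ne_zero hc two_ne_zero), hschur,
    det_smul_add_fin_two, det_smul_add_fin_two]
  simp only [det_smul, det_one, det_mul, det_transpose, det_sigmaZ, Fintype.card_fin]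
  rw [← sub_nonneg, ← sub_nonneg (a := _ * s ^ 2),
    ← mul_nonneg_iff_of_pos_left four_pos]
  refine iff_of_eq (congrArg _ ?_)
  field_simp
  linear_combination (64 * g.det - 16 * M.det ^ 2 - 16) * hcs

theorem stmt2_general (r : ℝ) (hr : 0 < r) (M g : Matrix (Fin 2) (Fin 2) ℝ) :
    sepCond (dsum 1 M * tmss r * (dsum 1 M)ᵀ + dsum 0 g) ↔ 4 * g.det ≥ (M.det + 1) ^ 2 := by
  rw [sepCond_dsum_one_mul_tmss_iff, ge_iff_le]
  exact mul_le_mul_iff_of_pos_right (pow_pos (Real.sinh_pos_iff.2 hr) 2)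

theorem stmt2 (r : ℝ) (hr : 0 < r) (M g : Matrix (Fin 2) (Fin 2) ℝ) (hg : g.IsSymm) :
    sepCond (dsum 1 M * tmss r * (dsum 1 M)ᵀ + dsum 0 g) ↔ 4 * g.det ≥ (M.det + 1) ^ 2 :=
  stmt2_general r hr M g
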